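/- Fix a₀ ∈ ℝⁿ and let Q : ℝ → M(n×n, ℝ) and r : ℝ → ℝⁿ be differentiable. Define L(t) = [[−Q(t), r(t), 0], [a₀ᵀ, 0, −r(t)ᵀ], [0, −a₀, Q(t)ᵀ]] and M(t) = [[−Q(t), 0, 0], [a₀ᵀ, 0, 0], [0, −a₀, Q(t)ᵀ]] (block sizes n,1,n). Then the Lax equation L̇ = [L, M] holds on ℝ if and only if Q and r satisfy the system of ODEs Q̇ = −r a₀ᵀ and ṙ = Q r. -/

import Mathlib

/-!
Multiplying out the blocks, the commutator is
`[L, M] = [[r a₀ᵀ, Q r, 0], [0, 0, -(Q r)ᵀ], [0, 0, -(r a₀ᵀ)ᵀ]]`,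
the `(2,1)` block `rᵀ a₀ - a₀ᵀ r` vanishing because it is a scalar and hence equal to its own
transpose. On the other hand `L̇ = [[-Q̇, ṙ, 0], [0, 0, -ṙᵀ], [0, 0, Q̇ᵀ]]`. Comparing blocks, the
Lax equation amounts to `-Q̇ = r a₀ᵀ` and `ṙ = Q r`; the two remaining nonzero blocks are the
transposes of these.
-/

open Matrix

/-- Index type for `(2n+1)×(2n+1)` real matrices with block sizes `(n, 1, n)`. -/
abbrev Idx (n : ℕ) := (Fin n ⊕ Fin 1) ⊕ Fin n

/-- The `3×3`-block matrix with block sizes `(n,1,n)` and the given blocks. -/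
def blk3 {n : ℕ} (A₁₁ : Matrix (Fin n) (Fin n) ℝ) (A₁₂ : Matrix (Fin n) (Fin 1) ℝ)
    (A₁₃ : Matrix (Fin n) (Fin n) ℝ) (A₂₁ : Matrix (Fin 1) (Fin n) ℝ)
    (A₂₂ : Matrix (Fin 1) (Fin 1) ℝ) (A₂₃ : Matrix (Fin 1) (Fin n) ℝ)
    (A₃₁ : Matrix (Fin n) (Fin n) ℝ) (A₃₂ : Matrix (Fin n) (Fin 1) ℝ)
    (A₃₃ : Matrix (Fin n) (Fin n) ℝ) : Matrix (Idx n) (Idx n) ℝ :=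
  Matrix.fromBlocks (Matrix.fromBlocks A₁₁ A₁₂ A₂₁ A₂₂) (Matrix.fromRows A₁₃ A₂₃)
    (Matrix.fromCols A₃₁ A₃₂) A₃₃

/-- The matrix `J = [[0,0,Iₙ],[0,1,0],[Iₙ,0,0]]` with block sizes `(n,1,n)`. -/
def Jmat (n : ℕ) : Matrix (Idx n) (Idx n) ℝ := blk3 0 0 1 0 1 0 1 0 0

/-- The matrix `V = [[−A₀, a₀, 0], [a₀ᵀ, 0, −a₀ᵀ], [0, −a₀, A₀]]` with block sizes `(n,1,n)`. -/
def Vmat {n : ℕ} (A₀ : Matrix (Fin n) (Fin n) ℝ) (a₀ : Matrix (Fin n) (Fin 1) ℝ) :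
    Matrix (Idx n) (Idx n) ℝ :=
  blk3 (-A₀) a₀ 0 a₀ᵀ 0 (-a₀ᵀ) 0 (-a₀) A₀

section Blocks

variable {n : ℕ}

lemma blk3_mul (A₁₁ B₁₁ : Matrix (Fin n) (Fin n) ℝ) (A₁₂ B₁₂ : Matrix (Fin n) (Fin 1) ℝ)
    (A₁₃ B₁₃ : Matrix (Fin n) (Fin n) ℝ) (A₂₁ B₂₁ : Matrix (Fin 1) (Fin n) ℝ)
    (A₂₂ B₂₂ : Matrix (Fin 1) (Fin 1) ℝ) (A₂₃ B₂₃ : Matrix (Fin 1) (Fin n) ℝ)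
    (A₃₁ B₃₁ : Matrix (Fin n) (Fin n) ℝ) (A₃₂ B₃₂ : Matrix (Fin n) (Fin 1) ℝ)
    (A₃₃ B₃₃ : Matrix (Fin n) (Fin n) ℝ) :
    blk3 A₁₁ A₁₂ A₁₃ A₂₁ A₂₂ A₂₃ A₃₁ A₃₂ A₃₃ * blk3 B₁₁ B₁₂ B₁₃ B₂₁ B₂₂ B₂₃ B₃₁ B₃₂ B₃₃ =
    blk3 (A₁₁ * B₁₁ + A₁₂ * B₂₁ + A₁₃ * B₃₁) (A₁₁ * B₁₂ + A₁₂ * B₂₂ + A₁₃ * B₃₂)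
      (A₁₁ * B₁₃ + A₁₂ * B₂₃ + A₁₃ * B₃₃) (A₂₁ * B₁₁ + A₂₂ * B₂₁ + A₂₃ * B₃₁)
      (A₂₁ * B₁₂ + A₂₂ * B₂₂ + A₂₃ * B₃₂) (A₂₁ * B₁₃ + A₂₂ * B₂₃ + A₂₃ * B₃₃)
      (A₃₁ * B₁₁ + A₃₂ * B₂₁ + A₃₃ * B₃₁) (A₃₁ * B₁₂ + A₃₂ * B₂₂ + A₃₃ * B₃₂)
      (A₃₁ * B₁₃ + A₃₂ * B₂₃ + A₃₃ * B₃₃) := by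
  ext ((i | i) | i) ((j | j) | j) <;>
    simp [blk3, fromBlocks_multiply, fromBlocks_mul_fromRows, fromCols_mul_fromBlocks,
      fromCols_mul_fromRows, fromRows_mul, mul_fromCols, add_assoc]

lemma blk3_sub (A₁₁ B₁₁ : Matrix (Fin n) (Fin n) ℝ) (A₁₂ B₁₂ : Matrix (Fin n) (Fin 1) ℝ)
    (A₁₃ B₁₃ : Matrix (Fin n) (Fin n) ℝ) (A₂₁ B₂₁ : Matrix (Fin 1) (Fin n) ℝ)
    (A₂₂ B₂₂ : Matrix (Fin 1) (Fin 1) ℝ) (A₂₃ B₂₃ : Matrix (Fin 1) (Fin n) ℝ)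
    (A₃₁ B₃₁ : Matrix (Fin n) (Fin n) ℝ) (A₃₂ B₃₂ : Matrix (Fin n) (Fin 1) ℝ)
    (A₃₃ B₃₃ : Matrix (Fin n) (Fin n) ℝ) :
    blk3 A₁₁ A₁₂ A₁₃ A₂₁ A₂₂ A₂₃ A₃₁ A₃₂ A₃₃ - blk3 B₁₁ B₁₂ B₁₃ B₂₁ B₂₂ B₂₃ B₃₁ B₃₂ B₃₃ =
    blk3 (A₁₁ - B₁₁) (A₁₂ - B₁₂) (A₁₃ - B₁₃) (A₂₁ - B₂₁) (A₂₂ - B₂₂) (A₂₃ - B₂₃)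
      (A₃₁ - B₃₁) (A₃₂ - B₃₂) (A₃₃ - B₃₃) := by
  ext ((i | i) | i) ((j | j) | j) <;> simp [blk3]

lemma blk3_inj {A₁₁ B₁₁ : Matrix (Fin n) (Fin n) ℝ} {A₁₂ B₁₂ : Matrix (Fin n) (Fin 1) ℝ}
    {A₁₃ B₁₃ : Matrix (Fin n) (Fin n) ℝ} {A₂₁ B₂₁ : Matrix (Fin 1) (Fin n) ℝ}
    {A₂₂ B₂₂ : Matrix (Fin 1) (Fin 1) ℝ} {A₂₃ B₂₃ : Matrix (Fin 1) (Fin n) ℝ}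
    {A₃₁ B₃₁ : Matrix (Fin n) (Fin n) ℝ} {A₃₂ B₃₂ : Matrix (Fin n) (Fin 1) ℝ}
    {A₃₃ B₃₃ : Matrix (Fin n) (Fin n) ℝ} :
    blk3 A₁₁ A₁₂ A₁₃ A₂₁ A₂₂ A₂₃ A₃₁ A₃₂ A₃₃ = blk3 B₁₁ B₁₂ B₁₃ B₂₁ B₂₂ B₂₃ B₃₁ B₃₂ B₃₃ ↔
      A₁₁ = B₁₁ ∧ A₁₂ = B₁₂ ∧ A₁₃ = B₁₃ ∧ A₂₁ = B₂₁ ∧ A₂₂ = B₂₂ ∧ A₂₃ = B₂₃ ∧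
        A₃₁ = B₃₁ ∧ A₃₂ = B₃₂ ∧ A₃₃ = B₃₃ := by
  simp only [blk3, fromBlocks_inj, fromRows_inj.eq_iff, fromCols_inj.eq_iff, and_assoc]
  tauto

end Blocks

lemma transpose_mul_comm_of_subsingleton {R m ι : Type*} [CommSemiring R] [Fintype m]
    [Subsingleton ι] (r a : Matrix m ι R) : rᵀ * a = aᵀ * r := by
  ext i j
  obtain rfl : i = j := Subsingleton.elim i j
  simp only [mul_apply, transpose_apply, mul_comm]

lemma lax_commutator_eq {n : ℕ} (Q : Matrix (Fin n) (Fin n) ℝ) (r a₀ : Matrix (Fin n) (Fin 1) ℝ) :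
    blk3 (-Q) r 0 a₀ᵀ 0 (-rᵀ) 0 (-a₀) Qᵀ * blk3 (-Q) 0 0 a₀ᵀ 0 0 0 (-a₀) Qᵀ -
      blk3 (-Q) 0 0 a₀ᵀ 0 0 0 (-a₀) Qᵀ * blk3 (-Q) r 0 a₀ᵀ 0 (-rᵀ) 0 (-a₀) Qᵀ =
    blk3 (r * a₀ᵀ) (Q * r) 0 0 0 (-(Q * r)ᵀ) 0 0 (-(r * a₀ᵀ)ᵀ) := by
  rw [blk3_mul, blk3_mul, blk3_sub]
  simp [transpose_mul, transpose_mul_comm_of_subsingleton r a₀]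

-- Matrices carry no global norm instance, so differentiability is taken entrywise.
def HasEntrywiseDerivAt {𝕜 m p : Type*} [NontriviallyNormedField 𝕜] (A : 𝕜 → Matrix m p 𝕜)
    (A' : Matrix m p 𝕜) (t : 𝕜) : Prop :=
  ∀ i j, HasDerivAt (fun s => A s i j) (A' i j) t

namespace HasEntrywiseDerivAt

variable {𝕜 m p : Type*} [NontriviallyNormedField 𝕜] {A : 𝕜 → Matrix m p 𝕜} {A' : Matrix m p 𝕜}
  {t : 𝕜}

lemma const (B : Matrix m p 𝕜) : HasEntrywiseDerivAt (fun _ => B) 0 t :=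
  fun _ _ => hasDerivAt_const t _

lemma neg (h : HasEntrywiseDerivAt A A' t) : HasEntrywiseDerivAt (fun s => -A s) (-A') t :=
  fun i j => (h i j).neg

lemma transpose (h : HasEntrywiseDerivAt A A' t) :
    HasEntrywiseDerivAt (fun s => (A s)ᵀ) A'ᵀ t :=
  fun i j => h j i

lemma unique {A'' : Matrix m p 𝕜} (h : HasEntrywiseDerivAt A A' t)
    (h' : HasEntrywiseDerivAt A A'' t) : A' = A'' :=
  Matrix.ext fun i j => (h i j).unique (h' i j)

end HasEntrywiseDerivAt

lemma HasEntrywiseDerivAt.blk3 {n : ℕ} {t : ℝ}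
    {A₁₁ : ℝ → Matrix (Fin n) (Fin n) ℝ} {A₁₂ : ℝ → Matrix (Fin n) (Fin 1) ℝ}
    {A₁₃ : ℝ → Matrix (Fin n) (Fin n) ℝ} {A₂₁ : ℝ → Matrix (Fin 1) (Fin n) ℝ}
    {A₂₂ : ℝ → Matrix (Fin 1) (Fin 1) ℝ} {A₂₃ : ℝ → Matrix (Fin 1) (Fin n) ℝ}
    {A₃₁ : ℝ → Matrix (Fin n) (Fin n) ℝ} {A₃₂ : ℝ → Matrix (Fin n) (Fin 1) ℝ}
    {A₃₃ : ℝ → Matrix (Fin n) (Fin n) ℝ}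
    {A₁₁' A₁₃' A₃₁' A₃₃' : Matrix (Fin n) (Fin n) ℝ} {A₁₂' A₃₂' : Matrix (Fin n) (Fin 1) ℝ}
    {A₂₁' A₂₃' : Matrix (Fin 1) (Fin n) ℝ} {A₂₂' : Matrix (Fin 1) (Fin 1) ℝ}
    (h₁₁ : HasEntrywiseDerivAt A₁₁ A₁₁' t) (h₁₂ : HasEntrywiseDerivAt A₁₂ A₁₂' t)
    (h₁₃ : HasEntrywiseDerivAt A₁₃ A₁₃' t) (h₂₁ : HasEntrywiseDerivAt A₂₁ A₂₁' t)
    (h₂₂ : HasEntrywiseDerivAt A₂₂ A₂₂' t) (h₂₃ : HasEntrywiseDerivAt A₂₃ A₂₃' t)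
    (h₃₁ : HasEntrywiseDerivAt A₃₁ A₃₁' t) (h₃₂ : HasEntrywiseDerivAt A₃₂ A₃₂' t)
    (h₃₃ : HasEntrywiseDerivAt A₃₃ A₃₃' t) :
    HasEntrywiseDerivAt
      (fun s => blk3 (A₁₁ s) (A₁₂ s) (A₁₃ s) (A₂₁ s) (A₂₂ s) (A₂₃ s) (A₃₁ s) (A₃₂ s) (A₃₃ s))
      (blk3 A₁₁' A₁₂' A₁₃' A₂₁' A₂₂' A₂₃' A₃₁' A₃₂' A₃₃') t := by
  rintro ((i | i) | i) ((j | j) | j)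
  exacts [h₁₁ i j, h₁₂ i j, h₁₃ i j, h₂₁ i j, h₂₂ i j, h₂₃ i j, h₃₁ i j, h₃₂ i j, h₃₃ i j]

lemma lax_blocks_eq_iff {n : ℕ} (Q dQ : Matrix (Fin n) (Fin n) ℝ)
    (r dr a₀ : Matrix (Fin n) (Fin 1) ℝ) :
    blk3 (r * a₀ᵀ) (Q * r) 0 0 0 (-(Q * r)ᵀ) 0 0 (-(r * a₀ᵀ)ᵀ) =
        blk3 (-dQ) dr 0 0 0 (-drᵀ) 0 0 dQᵀ ↔
      dQ = -(r * a₀ᵀ) ∧ dr = Q * r := by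
  rw [blk3_inj]
  constructor
  · rintro ⟨hQ, hr, -⟩
    exact ⟨by rw [hQ, neg_neg], hr.symm⟩
  · rintro ⟨rfl, rfl⟩
    simp

/-- For differentiable `Q, r`, with
`L(t) = [[−Q(t), r(t), 0], [a₀ᵀ, 0, −r(t)ᵀ], [0, −a₀, Q(t)ᵀ]]` and
`M(t) = [[−Q(t), 0, 0], [a₀ᵀ, 0, 0], [0, −a₀, Q(t)ᵀ]]`, the Lax equation `L̇ = [L, M]`
holds on `ℝ` iff `Q̇ = −r a₀ᵀ` and `ṙ = Q r` on `ℝ`. -/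
theorem stmt14 (n : ℕ) (a₀ : Matrix (Fin n) (Fin 1) ℝ)
    (Q dQ : ℝ → Matrix (Fin n) (Fin n) ℝ) (r dr : ℝ → Matrix (Fin n) (Fin 1) ℝ)
    (hQ : ∀ t i j, HasDerivAt (fun s => Q s i j) (dQ t i j) t)
    (hr : ∀ t i j, HasDerivAt (fun s => r s i j) (dr t i j) t) :
    (∀ (t : ℝ) (i j : Idx n),
      HasDerivAt (fun s => blk3 (-(Q s)) (r s) 0 a₀ᵀ 0 (-(r s)ᵀ) 0 (-a₀) (Q s)ᵀ i j)
        ((blk3 (-(Q t)) (r t) 0 a₀ᵀ 0 (-(r t)ᵀ) 0 (-a₀) (Q t)ᵀ *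
            blk3 (-(Q t)) 0 0 a₀ᵀ 0 0 0 (-a₀) (Q t)ᵀ -
          blk3 (-(Q t)) 0 0 a₀ᵀ 0 0 0 (-a₀) (Q t)ᵀ *
            blk3 (-(Q t)) (r t) 0 a₀ᵀ 0 (-(r t)ᵀ) 0 (-a₀) (Q t)ᵀ) i j) t) ↔
    (∀ t : ℝ, dQ t = -(r t * a₀ᵀ) ∧ dr t = Q t * r t) := by
  have hL : ∀ t, HasEntrywiseDerivAt
      (fun s => blk3 (-(Q s)) (r s) 0 a₀ᵀ 0 (-(r s)ᵀ) 0 (-a₀) (Q s)ᵀ)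
      (blk3 (-(dQ t)) (dr t) 0 0 0 (-(dr t)ᵀ) 0 0 (dQ t)ᵀ) t := fun t =>
    have hQt : HasEntrywiseDerivAt Q (dQ t) t := hQ t
    have hrt : HasEntrywiseDerivAt r (dr t) t := hr t
    .blk3 hQt.neg hrt (.const _) (.const _) (.const _) hrt.transpose.neg (.const _) (.const _)
      hQt.transpose
  refine forall_congr' fun t => ?_
  change HasEntrywiseDerivAt _ _ t ↔ _
  rw [lax_commutator_eq, ← lax_blocks_eq_iff]
  exact ⟨fun h => h.unique (hL t), fun h => h ▸ hL t⟩
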